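/- Fix a ∈ (0, π/3) and a function q : ℝ → ℂ, square-integrable on (0, π), with q(x) = 0 for all x outside (3a/2, 3a). For ν ∈ {0,1} define Q_ν(x) = (∫_{x+a/2}^{3a} q(t) dt)(∫_a^{x−a/2} q(τ) dτ) − (−1)^ν ∫_a^{7a/2−x} q(t) (∫_{x+t−a/2}^{3a} q(τ) dτ) dt for x ∈ (3a/2, 5a/2), and set w_ν(x) = q(x) for x ∈ (a, 3a/2) ∪ (5a/2, 3a) and w_ν(x) = q(x) + Q_ν(x) for x ∈ (3a/2, 5a/2). Let K_q(x) = ∫_x^{3a} q(τ) dτ and (M_q f)(x) = ∫_{3a/2}^{7a/2−x} K_q(x + t − a/2) f(t) dt. Then for every ν ∈ {0,1}: w_ν(x) = 0 for x ∈ (a, 3a/2); w_ν(x) = q(x) − (−1)^ν (M_q q)(x) for x ∈ (3a/2, 2a); w_ν(x) = q(x) + K_q(x + a/2) ∫_{3a/2}^{x−a/2} q(t) dt for x ∈ (2a, 5a/2); and w_ν(x) = q(x) for x ∈ (5a/2, 3a). -/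

import Mathlib

open MeasureTheory Set
open scoped Real

noncomputable def Qfun (a : ℝ) (q : ℝ → ℂ) (ν : ℕ) (x : ℝ) : ℂ :=
  (∫ t in (x + a / 2)..(3 * a), q t) * (∫ τ in a..(x - a / 2), q τ)
    - (-1) ^ ν * ∫ t in a..(7 * a / 2 - x), q t * (∫ τ in (x + t - a / 2)..(3 * a), q τ)

noncomputable def wfun (a : ℝ) (q : ℝ → ℂ) (ν : ℕ) (x : ℝ) : ℂ :=
  if x ∈ Set.Ioo (3 * a / 2) (5 * a / 2) then q x + Qfun a q ν x else q x

noncomputable def Kfun (a : ℝ) (h : ℝ → ℂ) (x : ℝ) : ℂ := ∫ τ in x..(3 * a), h τ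

noncomputable def Mop (a : ℝ) (h f : ℝ → ℂ) (x : ℝ) : ℂ :=
  ∫ t in (3 * a / 2)..(7 * a / 2 - x), Kfun a h (x + t - a / 2) * f t

open intervalIntegral

/-
The potential vanishes on `(-∞, 3a/2]`, so every integral of `q` whose range of integration lies
left of `3a/2` drops out of `Q_ν`. For `x < 2a` this kills the product term and leaves the second
term starting at `3a/2`, which is `M_q q`; for `x > 2a` it kills the second term and moves the
lower limit of `∫_a^{x-a/2} q` to `3a/2`.
-/

lemma integrable_of_memLp_Ioo_of_support_subset {E : Type*} [NormedAddCommGroup E]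
    {f : ℝ → E} {b c : ℝ} {p : ENNReal} (hp : 1 ≤ p)
    (hf : MemLp f p (volume.restrict (Ioo b c))) (hsupp : Function.support f ⊆ Ioo b c) :
    Integrable f :=
  (integrableOn_iff_integrable_of_support_subset hsupp).1 (hf.integrable hp)

lemma intervalIntegral_eq_zero_of_forall_le_eq_zero {E : Type*} [NormedAddCommGroup E]
    [NormedSpace ℝ E] {f : ℝ → E} {c u v : ℝ} (hf : ∀ t ≤ c, f t = 0) (hu : u ≤ c)
    (hv : v ≤ c) : ∫ t in u..v, f t = 0 := by
  rw [integral_congr (g := fun _ => 0) fun t ht => hf t (max_le hu hv |>.trans' ht.2)]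
  exact integral_zero

lemma continuous_Kfun (a : ℝ) {h : ℝ → ℂ} (hh : Integrable h) : Continuous (Kfun a h) := by
  have hK : Kfun a h = fun y => (∫ τ in (0 : ℝ)..3 * a, h τ) - ∫ τ in (0 : ℝ)..y, h τ := by
    funext y
    exact (integral_interval_sub_left hh.intervalIntegrable hh.intervalIntegrable).symm
  rw [hK]
  exact continuous_const.sub (hh.continuous_primitive 0)

lemma Qfun_eq_Kfun (a : ℝ) (q : ℝ → ℂ) (ν : ℕ) (x : ℝ) :
    Qfun a q ν x = Kfun a q (x + a / 2) * (∫ τ in a..(x - a / 2), q τ)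
      - (-1) ^ ν * ∫ t in a..(7 * a / 2 - x), q t * Kfun a q (x + t - a / 2) :=
  rfl

section VanishingBelow

variable {a : ℝ} {q : ℝ → ℂ}

lemma Qfun_eq_neg_Mop (hq : Integrable q) (hq_le : ∀ t ≤ 3 * a / 2, q t = 0) (ha : 0 ≤ a)
    (ν : ℕ) {x : ℝ} (hx : x ≤ 2 * a) :
    Qfun a q ν x = -((-1) ^ ν * Mop a q q x) := by
  have hK := continuous_Kfun a hq
  have hII : ∀ u v, IntervalIntegrable (fun t => q t * Kfun a q (x + t - a / 2)) volume u v :=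
    fun u v => hq.intervalIntegrable.mul_continuousOn (by fun_prop)
  have hleft : ∫ τ in a..(x - a / 2), q τ = 0 :=
    intervalIntegral_eq_zero_of_forall_le_eq_zero hq_le (by linarith) (by linarith)
  have hhead : ∫ t in a..(3 * a / 2), q t * Kfun a q (x + t - a / 2) = 0 :=
    intervalIntegral_eq_zero_of_forall_le_eq_zero (fun t ht => by rw [hq_le t ht, zero_mul])
      (by linarith) le_rfl
  have hMop : Mop a q q x = ∫ t in (3 * a / 2)..(7 * a / 2 - x), q t * Kfun a q (x + t - a / 2) :=
    integral_congr fun t _ => mul_comm _ _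
  rw [Qfun_eq_Kfun, hleft, ← integral_add_adjacent_intervals (hII a (3 * a / 2)) (hII _ _),
    hhead, hMop]
  ring

lemma Qfun_eq_Kfun_mul_integral (hq : Integrable q) (hq_le : ∀ t ≤ 3 * a / 2, q t = 0)
    (ha : 0 ≤ a) (ν : ℕ) {x : ℝ} (hx : 2 * a ≤ x) :
    Qfun a q ν x = Kfun a q (x + a / 2) * ∫ t in (3 * a / 2)..(x - a / 2), q t := by
  have hsecond : ∫ t in a..(7 * a / 2 - x), q t * Kfun a q (x + t - a / 2) = 0 :=
    intervalIntegral_eq_zero_of_forall_le_eq_zero (fun t ht => by rw [hq_le t ht, zero_mul])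
      (by linarith) (by linarith)
  have hhead : ∫ τ in a..(3 * a / 2), q τ = 0 :=
    intervalIntegral_eq_zero_of_forall_le_eq_zero hq_le (by linarith) le_rfl
  rw [Qfun_eq_Kfun, hsecond, ← integral_add_adjacent_intervals hq.intervalIntegrable
    hq.intervalIntegrable, hhead]
  ring

end VanishingBelow

theorem statement13
    (a : ℝ) (ha : a ∈ Set.Ioo 0 (π / 3))
    (q : ℝ → ℂ)
    (hq2 : MemLp q 2 (volume.restrict (Set.Ioo 0 π)))
    (hq0 : ∀ x : ℝ, x ∉ Set.Ioo (3 * a / 2) (3 * a) → q x = 0) :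
    ∀ ν : ℕ, (ν = 0 ∨ ν = 1) →
      (∀ x ∈ Set.Ioo a (3 * a / 2), wfun a q ν x = 0) ∧
      (∀ x ∈ Set.Ioo (3 * a / 2) (2 * a),
        wfun a q ν x = q x - (-1) ^ ν * Mop a q q x) ∧
      (∀ x ∈ Set.Ioo (2 * a) (5 * a / 2),
        wfun a q ν x = q x + Kfun a q (x + a / 2) * ∫ t in (3 * a / 2)..(x - a / 2), q t) ∧
      (∀ x ∈ Set.Ioo (5 * a / 2) (3 * a), wfun a q ν x = q x) := by
  obtain ⟨ha0, haπ⟩ := ha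
  have hsupp : Function.support q ⊆ Ioo (3 * a / 2) (3 * a) :=
    fun t ht => by_contra fun h => ht (hq0 t h)
  have hq : Integrable q := integrable_of_memLp_Ioo_of_support_subset one_le_two hq2
    (hsupp.trans (Ioo_subset_Ioo (by positivity) (by linarith)))
  have hq_le : ∀ t ≤ 3 * a / 2, q t = 0 := fun t ht => hq0 t fun h => h.1.not_ge ht
  intro ν _
  refine ⟨fun x hx => ?_, fun x hx => ?_, fun x hx => ?_, fun x hx => ?_⟩
  · rw [wfun, if_neg fun h => h.1.not_gt hx.2]
    exact hq_le x hx.2.le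
  · rw [wfun, if_pos ⟨hx.1, by linarith [hx.2]⟩, Qfun_eq_neg_Mop hq hq_le ha0.le ν hx.2.le]
    ring
  · rw [wfun, if_pos ⟨by linarith [hx.1], hx.2⟩,
      Qfun_eq_Kfun_mul_integral hq hq_le ha0.le ν hx.1.le]
  · rw [wfun, if_neg fun h => h.2.not_gt hx.1]
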